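/- Let K^f, K^r, K^s ⊆ ℝ satisfy: K^r ⊆ K^s, K^{fr} := K^f ∩ K^r is nonempty, K^f is downward closed, and sup K^f = inf K^s. Then K^{fr} is a singleton {p*}, the value p* satisfies p* = max K^f = min K^r = min K^{fr} = min K^s, and in particular p* is finite. -/

import Mathlib

theorem Set.inter_eq_singleton_of_mem_upperBounds_of_mem_lowerBounds {α : Type*} [PartialOrder α]
    {s t : Set α} {a : α} (hs : a ∈ upperBounds s) (ht : a ∈ lowerBounds t)
    (hne : (s ∩ t).Nonempty) : s ∩ t = {a} := by
  have hsub : s ∩ t ⊆ {a} := fun p hp => le_antisymm (hs hp.1) (ht hp.2)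
  exact hne.subset_singleton_iff.mp hsub

theorem stmt_2_general (Kf Kr Ks : Set ℝ) (v : ℝ)
    (hrs : Kr ⊆ Ks)
    (hne : (Kf ∩ Kr).Nonempty)
    (hlub : IsLUB Kf v) (hglb : IsGLB Ks v) :
    Kf ∩ Kr = {v} ∧ IsGreatest Kf v ∧ IsLeast Kr v ∧
      IsLeast (Kf ∩ Kr) v ∧ IsLeast Ks v := by
  have hKr : v ∈ lowerBounds Kr := lowerBounds_mono_set hrs hglb.1
  have hfr : Kf ∩ Kr = {v} :=
    Set.inter_eq_singleton_of_mem_upperBounds_of_mem_lowerBounds hlub.1 hKr hne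
  have hleast : IsLeast (Kf ∩ Kr) v := hfr ▸ isLeast_singleton
  obtain ⟨hvf, hvr⟩ := hleast.1
  exact ⟨hfr, ⟨hvf, hlub.1⟩, ⟨hvr, hKr⟩, hleast, ⟨hrs hvr, hglb.1⟩⟩

/-- Abstraction of Lemma 2.6: the set of fair replication costs is a singleton and its
unique element is the maximum fair price, the minimum replication cost and the
minimum superhedging cost. -/
theorem stmt_2 (Kf Kr Ks : Set ℝ) (v : ℝ)
    (hrs : Kr ⊆ Ks)
    (hne : (Kf ∩ Kr).Nonempty)
    (hdc : ∀ p ∈ Kf, ∀ q : ℝ, q < p → q ∈ Kf)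
    (hlub : IsLUB Kf v) (hglb : IsGLB Ks v) :
    Kf ∩ Kr = {v} ∧ IsGreatest Kf v ∧ IsLeast Kr v ∧
      IsLeast (Kf ∩ Kr) v ∧ IsLeast Ks v :=
  stmt_2_general Kf Kr Ks v hrs hne hlub hglb
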